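/- Let G=(V,E) be a finite simple graph on n ≥ 1 vertices, let q ≥ 2 be an integer, let P_1,…,P_ℓ be a partition of V and α > 0 such that for every i and every S ⊆ P_i with |S| ≤ |P_i|/2 one has |∂_{G[P_i]}(S)| ≥ α|S|, and suppose |P_i| ≥ ηn for every i, where η > 0. Then for every β ≥ 4·log(e·q)/(αη): e^{−e^{−n}} ≤ Z*_G(β)/Z_G(β) ≤ 1; in particular Z*_G(β) is a relative e^{−n}-approximation of Z_G(β). -/

import Mathlib

open Classical

noncomputable section

namespace Paper

variable {V : Type*}

/-- The degree of a vertex. -/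
def deg (G : SimpleGraph V) (v : V) : ℕ := (G.neighborSet v).ncard

/-- The volume of a vertex set: the sum of the degrees of its vertices. -/
def vol (G : SimpleGraph V) (S : Set V) : ℕ := ∑ᶠ v ∈ S, deg G v

/-- The edge boundary ∂(S): edges of `G` with exactly one endpoint in `S`. -/
def bdry (G : SimpleGraph V) (S : Set V) : Set (Sym2 V) :=
  {e | e ∈ G.edgeSet ∧ (∃ u ∈ e, u ∈ S) ∧ (∃ v ∈ e, v ∉ S)}

/-- The closure ∇(S): edges of `G` with at least one endpoint in `S`. -/
def cl (G : SimpleGraph V) (S : Set V) : Set (Sym2 V) :=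
  {e | e ∈ G.edgeSet ∧ ∃ u ∈ e, u ∈ S}

/-- The conductance φ_G(S) = |∂(S)| / vol_G(S). -/
def cond (G : SimpleGraph V) (S : Set V) : ℝ :=
  ((bdry G S).ncard : ℝ) / (vol G S : ℝ)

/-- The conductance φ(G) of the graph: the minimum of φ_G(S) over nonempty S
with vol_G(S) ≤ vol_G(V)/2. -/
def graphCond [Fintype V] (G : SimpleGraph V) : ℝ :=
  sInf {x : ℝ | ∃ S : Set V, S.Nonempty ∧ 2 * vol G S ≤ vol G Set.univ ∧ x = cond G S}

/-- The induced subgraph G[P], realised as a graph on the same vertex set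
(vertices outside `P` are isolated). -/
def restrict (G : SimpleGraph V) (P : Set V) : SimpleGraph V where
  Adj u v := G.Adj u v ∧ u ∈ P ∧ v ∈ P
  symm := ⟨fun _ _ h => ⟨h.1.symm, h.2.2, h.2.1⟩⟩
  loopless := ⟨fun u h => G.irrefl h.1⟩

/-- e(S,T): the number of edges of `G` with one endpoint in `S` and the other in `T \ S`. -/
def eCount (G : SimpleGraph V) (S T : Set V) : ℕ :=
  ({e | e ∈ G.edgeSet ∧ ∃ u v, e = s(u, v) ∧ u ∈ S ∧ v ∈ T \ S}).ncard

/-- φ(S,B) = e(S,B) / ((vol(B∖S)/vol(B)) · e(S, V∖B)). -/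
def condPair (G : SimpleGraph V) (S B : Set V) : ℝ :=
  (eCount G S B : ℝ) /
    (((vol G (B \ S) : ℝ) / (vol G B : ℝ)) * (eCount G S (Set.univ \ B) : ℝ))

/-- An edge is monochromatic under a colouring if all its endpoints get the same colour. -/
def Mono {q : ℕ} (χ : V → Fin q) (e : Sym2 V) : Prop :=
  ∀ u ∈ e, ∀ v ∈ e, χ u = χ v

/-- The number of edges in `F` that are monochromatic under `χ`. -/
def monoCount {q : ℕ} (χ : V → Fin q) (F : Set (Sym2 V)) : ℕ :=
  {e ∈ F | Mono χ e}.ncard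

/-- m_G(χ): the number of monochromatic edges of `G` under `χ`. -/
def mG {q : ℕ} (G : SimpleGraph V) (χ : V → Fin q) : ℕ := monoCount χ G.edgeSet

/-- The q-colour Potts model partition function. -/
def Z [Fintype V] [DecidableEq V] (G : SimpleGraph V) (q : ℕ) (β : ℝ) : ℝ :=
  ∑ ω : V → Fin q, Real.exp (β * (mG G ω : ℝ))

/-- P_1, …, P_ℓ form a partition of the vertex set. -/
def IsPartition {ℓ : ℕ} (P : Fin ℓ → Set V) : Prop :=
  (∀ i j : Fin ℓ, i ≠ j → Disjoint (P i) (P j)) ∧ (⋃ i, P i) = Set.univ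

/-- A set is small (w.r.t. the partition P) if |S ∩ P i| ≤ |P i|/2 for all i. -/
def Small {ℓ : ℕ} (P : Fin ℓ → Set V) (S : Set V) : Prop :=
  ∀ i, ((S ∩ P i).ncard : ℝ) ≤ ((P i).ncard : ℝ) / 2

/-- A set U is sparse if the vertex set of every connected component of G[U] is small. -/
def Sparse {ℓ : ℕ} (G : SimpleGraph V) (P : Fin ℓ → Set V) (U : Set V) : Prop :=
  ∀ u ∈ U, Small P {v | (restrict G U).Reachable u v}

/-- Every `S ⊆ P i` with `|S| ≤ |P i|/2` satisfies `|∂_{G[P i]}(S)| ≥ α |S|`. -/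
def PartExpansion {ℓ : ℕ} (G : SimpleGraph V) (P : Fin ℓ → Set V) (α : ℝ) : Prop :=
  ∀ i, ∀ S ⊆ P i, (S.ncard : ℝ) ≤ ((P i).ncard : ℝ) / 2 →
    α * (S.ncard : ℝ) ≤ ((bdry (restrict G (P i)) S).ncard : ℝ)

/-- A ground state: a colouring constant on each part of the partition. -/
def GroundState {q ℓ : ℕ} (P : Fin ℓ → Set V) (ψ : V → Fin q) : Prop :=
  ∀ i : Fin ℓ, ∀ u ∈ P i, ∀ v ∈ P i, ψ u = ψ v

/-- A state ω is close to a ground state ψ if on each part, more than half of the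
vertices agree with ψ. -/
def CloseTo {q ℓ : ℕ} (P : Fin ℓ → Set V) (ω ψ : V → Fin q) : Prop :=
  ∀ i : Fin ℓ, ((P i).ncard : ℝ) / 2 < ((P i ∩ {v | ω v = ψ v}).ncard : ℝ)

/-- Z*: the contribution to Z from states close to some ground state. -/
def Zstar [Fintype V] [DecidableEq V] {ℓ : ℕ} (G : SimpleGraph V) (P : Fin ℓ → Set V)
    (q : ℕ) (β : ℝ) : ℝ :=
  ∑ ω : V → Fin q,
    if ∃ ψ : V → Fin q, GroundState P ψ ∧ CloseTo P ω ψ then Real.exp (β * (mG G ω : ℝ)) else 0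

/-- The colouring of V that colours γ by `lam` and everything else by `ψ`. -/
def combine {q : ℕ} (γ : Set V) (ψ : V → Fin q) (lam : γ → Fin q) : V → Fin q :=
  fun v => if h : v ∈ γ then lam ⟨v, h⟩ else ψ v

/-- m_G(ψ, γ, λ): the number of edges of ∇(γ) that are monochromatic when γ is
coloured by λ and all other vertices by ψ. -/
def mRes {q : ℕ} (G : SimpleGraph V) (γ : Set V) (ψ : V → Fin q) (lam : γ → Fin q) : ℕ :=
  monoCount (combine γ ψ lam) (cl G γ)

/-- A polymer: a nonempty small set inducing a connected subgraph. -/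
def Polymer {ℓ : ℕ} (G : SimpleGraph V) (P : Fin ℓ → Set V) (γ : Set V) : Prop :=
  γ.Nonempty ∧ (G.induce γ).Connected ∧ Small P γ

/-- Two polymers are compatible if they are disjoint with disjoint edge boundaries. -/
def Compatible (G : SimpleGraph V) (γ γ' : Set V) : Prop :=
  Disjoint γ γ' ∧ Disjoint (bdry G γ) (bdry G γ')

/-- The family of vertex sets of connected components of G[U]. -/
def components (G : SimpleGraph V) (U : Set V) : Set (Set V) :=
  {C | ∃ u ∈ U, C = {v | (restrict G U).Reachable u v}}

/-!
The constant colouring is close to a ground state, so `Z* ≥ e^{β|E|}`. A state close to no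
ground state has a part `P i` in which no colour class is a strict majority. Applying the
expansion of `G[P i]` to every colour class, and noting that an edge lies on the boundary of at
most two colour classes, at least `α|P i|/2 ≥ αηn/2` edges are bichromatic. So each of the at
most `qⁿ` such states weighs at most `e^{β(|E| - αηn/2)}`, and the bound on `β` makes their total
at most `e^{-n} e^{β|E|} ≤ e^{-n} Z*`; thus `Z* ≤ Z ≤ (1 + e^{-n}) Z*`.
-/

section Colourings

variable {q : ℕ}

lemma restrict_le (G : SimpleGraph V) (P : Set V) : restrict G P ≤ G :=
  fun _ _ h => h.1

lemma mG_const (G : SimpleGraph V) (c : Fin q) : mG G (fun _ => c) = G.edgeSet.ncard := by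
  simp [mG, monoCount, Mono]

lemma mG_add_ncard_nonMono_le [Finite V] {G H : SimpleGraph V} (hHG : H ≤ G) (ω : V → Fin q) :
    mG G ω + {e ∈ H.edgeSet | ¬ Mono ω e}.ncard ≤ G.edgeSet.ncard := by
  have hdisj : Disjoint {e ∈ G.edgeSet | Mono ω e} {e ∈ H.edgeSet | ¬ Mono ω e} :=
    Set.disjoint_left.mpr fun _ hmono hnon => hnon.2 hmono.2
  rw [mG, monoCount, ← Set.ncard_union_eq hdisj]
  exact Set.ncard_le_ncard
    (Set.union_subset (fun _ he => he.1) fun _ he => SimpleGraph.edgeSet_mono hHG he.1)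

lemma bdry_fiber_subset_nonMono (H : SimpleGraph V) (ω : V → Fin q) (c : Fin q) :
    bdry H {v | ω v = c} ⊆ {e ∈ H.edgeSet | ¬ Mono ω e} := by
  rintro e ⟨he, ⟨u, hue, hu⟩, ⟨v, hve, hv⟩⟩
  exact ⟨he, fun hmono => hv ((hmono v hve u hue).trans hu)⟩

lemma card_filter_mem_bdry_fiber_le_two (H : SimpleGraph V) (ω : V → Fin q) (e : Sym2 V) :
    (Finset.univ.filter fun c => e ∈ bdry H {v | ω v = c}).card ≤ 2 := by
  induction e using Sym2.ind with
  | _ a b =>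
    have hsub : (Finset.univ.filter fun c => s(a, b) ∈ bdry H {v | ω v = c}) ⊆ {ω a, ω b} := by
      intro c hc
      obtain ⟨-, ⟨u, hu, rfl⟩, -⟩ := (Finset.mem_filter.mp hc).2
      rcases Sym2.mem_iff.mp hu with rfl | rfl <;> simp
    exact (Finset.card_le_card hsub).trans Finset.card_le_two

lemma sum_ncard_bdry_fiber_le [Fintype V] (H : SimpleGraph V) (ω : V → Fin q) :
    ∑ c, (bdry H {v | ω v = c}).ncard ≤ 2 * {e ∈ H.edgeSet | ¬ Mono ω e}.ncard := by
  set N := {e ∈ H.edgeSet | ¬ Mono ω e}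
  let r : Fin q → Sym2 V → Prop := fun c e => e ∈ bdry H {v | ω v = c}
  have habove : ∀ c, (bdry H {v | ω v = c}).ncard = (N.toFinset.bipartiteAbove r c).card := by
    intro c
    rw [Set.ncard_eq_toFinset_card', Finset.bipartiteAbove]
    congr 1
    ext e
    simp only [Set.mem_toFinset, Finset.mem_filter]
    exact ⟨fun he => ⟨bdry_fiber_subset_nonMono H ω c he, he⟩, And.right⟩
  calc ∑ c, (bdry H {v | ω v = c}).ncard
      = ∑ e ∈ N.toFinset, (Finset.univ.bipartiteBelow r e).card := by
        simp_rw [habove]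
        exact Finset.sum_card_bipartiteAbove_eq_sum_card_bipartiteBelow r
    _ ≤ N.toFinset.card * 2 :=
        Finset.sum_le_card_nsmul _ _ _ fun e _ => card_filter_mem_bdry_fiber_le_two H ω e
    _ = 2 * N.ncard := by rw [Set.ncard_eq_toFinset_card', mul_comm]

lemma mem_of_mem_edgeSet_restrict {G : SimpleGraph V} {P : Set V} {e : Sym2 V}
    (he : e ∈ (restrict G P).edgeSet) {u : V} (hu : u ∈ e) : u ∈ P := by
  induction e using Sym2.ind with
  | _ a b => rcases Sym2.mem_iff.mp hu with rfl | rfl; exacts [he.2.1, he.2.2]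

lemma bdry_restrict_inter (G : SimpleGraph V) (P S : Set V) :
    bdry (restrict G P) (P ∩ S) = bdry (restrict G P) S := by
  ext e
  refine and_congr_right fun he => ?_
  have hP : ∀ u ∈ e, u ∈ P := fun u hu => mem_of_mem_edgeSet_restrict he hu
  simp only [Set.mem_inter_iff, not_and]
  constructor
  · rintro ⟨⟨u, hu, -, huS⟩, ⟨v, hv, hvS⟩⟩
    exact ⟨⟨u, hu, huS⟩, ⟨v, hv, hvS (hP v hv)⟩⟩
  · rintro ⟨⟨u, hu, huS⟩, ⟨v, hv, hvS⟩⟩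
    exact ⟨⟨u, hu, hP u hu, huS⟩, ⟨v, hv, fun _ => hvS⟩⟩

lemma sum_ncard_inter_fiber [Fintype V] (P : Set V) (ω : V → Fin q) :
    ∑ c, (P ∩ {v | ω v = c}).ncard = P.ncard := by
  rw [Set.ncard_eq_toFinset_card', Finset.card_eq_sum_card_fiberwise (f := ω) (t := Finset.univ)
    fun _ _ => Finset.mem_univ _]
  refine Finset.sum_congr rfl fun c _ => ?_
  rw [Set.ncard_eq_toFinset_card']
  congr 1
  ext v
  simp

end Colourings

section Partition

variable {ℓ q : ℕ}

lemma mG_add_le_of_no_majority [Fintype V] (G : SimpleGraph V) (P : Fin ℓ → Set V) (α : ℝ)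
    (hexp : PartExpansion G P α) (ω : V → Fin q) (i : Fin ℓ)
    (hnomaj : ∀ c, ((P i ∩ {v | ω v = c}).ncard : ℝ) ≤ ((P i).ncard : ℝ) / 2) :
    (mG G ω : ℝ) + α * ((P i).ncard : ℝ) / 2 ≤ (G.edgeSet.ncard : ℝ) := by
  set N := {e ∈ (restrict G (P i)).edgeSet | ¬ Mono ω e}
  have hbdry : α * ((P i).ncard : ℝ) ≤ 2 * (N.ncard : ℝ) := by
    calc α * ((P i).ncard : ℝ)
        = ∑ c, α * ((P i ∩ {v | ω v = c}).ncard : ℝ) := by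
          rw [← Finset.mul_sum, ← sum_ncard_inter_fiber (P i) ω, Nat.cast_sum]
      _ ≤ ∑ c, ((bdry (restrict G (P i)) {v | ω v = c}).ncard : ℝ) := by
          gcongr with c
          rw [← bdry_restrict_inter]
          exact hexp i _ Set.inter_subset_left (hnomaj c)
      _ ≤ 2 * (N.ncard : ℝ) := by exact_mod_cast sum_ncard_bdry_fiber_le _ ω
  have hsplit : (mG G ω : ℝ) + N.ncard ≤ G.edgeSet.ncard := by
    exact_mod_cast mG_add_ncard_nonMono_le (restrict_le G (P i)) ω
  linarith

lemma exists_no_majority_of_not_close (P : Fin ℓ → Set V) (hP : IsPartition P)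
    (ω : V → Fin q) (hfar : ¬ ∃ ψ : V → Fin q, GroundState P ψ ∧ CloseTo P ω ψ) :
    ∃ i, ∀ c, ((P i ∩ {v | ω v = c}).ncard : ℝ) ≤ ((P i).ncard : ℝ) / 2 := by
  by_contra! hmaj
  choose c hc using hmaj
  have hcover : ∀ v, ∃ i, v ∈ P i := fun v => Set.mem_iUnion.mp (hP.2 ▸ Set.mem_univ v)
  choose part hpart using hcover
  have hpart_eq : ∀ v i, v ∈ P i → part v = i := fun v i hv => by
    by_contra hne
    exact Set.disjoint_left.mp (hP.1 _ _ hne) (hpart v) hv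
  refine hfar ⟨fun v => c (part v),
    fun i u hu v hv => by simp only [hpart_eq u i hu, hpart_eq v i hv], fun i => ?_⟩
  have hsame : P i ∩ {v | ω v = c (part v)} = P i ∩ {v | ω v = c i} :=
    Set.ext fun v => and_congr_right fun hv => by simp only [Set.mem_ofPred_eq, hpart_eq v i hv]
  simpa only [CloseTo, hsame] using hc i

end Partition

section PartitionFunction

variable [Fintype V] [DecidableEq V] {ℓ : ℕ} (G : SimpleGraph V) (P : Fin ℓ → Set V) (q : ℕ)
  (β : ℝ)

lemma Zstar_le_Z : Zstar G P q β ≤ Z G q β :=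
  Finset.sum_le_sum fun _ _ => by split_ifs <;> [exact le_rfl; positivity]

lemma exp_mul_ncard_edgeSet_le_Zstar (hq : 0 < q) (hP : ∀ i, (P i).Nonempty) :
    Real.exp (β * G.edgeSet.ncard) ≤ Zstar G P q β := by
  set c : Fin q := ⟨0, hq⟩
  have hclose : ∃ ψ : V → Fin q, GroundState P ψ ∧ CloseTo P (fun _ => c) ψ :=
    ⟨fun _ => c, fun _ _ _ _ _ => rfl, fun i => by
      have hpos : (0 : ℝ) < (P i).ncard := by exact_mod_cast (Set.ncard_pos).mpr (hP i)
      simp only [Set.ofPred_true, Set.inter_univ]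
      linarith⟩
  calc Real.exp (β * G.edgeSet.ncard)
      = if ∃ ψ : V → Fin q, GroundState P ψ ∧ CloseTo P (fun _ => c) ψ
          then Real.exp (β * mG G (fun _ => c)) else 0 := by rw [if_pos hclose, mG_const]
    _ ≤ Zstar G P q β :=
        Finset.single_le_sum (f := fun ω : V → Fin q =>
            if ∃ ψ : V → Fin q, GroundState P ψ ∧ CloseTo P ω ψ
              then Real.exp (β * mG G ω) else 0)
          (fun _ _ => by split_ifs <;> positivity) (Finset.mem_univ _)

lemma Z_sub_Zstar_le (hβ : 0 ≤ β) (δ : ℝ)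
    (hfar : ∀ ω : V → Fin q, (¬ ∃ ψ : V → Fin q, GroundState P ψ ∧ CloseTo P ω ψ) →
      (mG G ω : ℝ) + δ ≤ G.edgeSet.ncard) :
    Z G q β - Zstar G P q β ≤ q ^ Fintype.card V * Real.exp (β * (G.edgeSet.ncard - δ)) := by
  calc Z G q β - Zstar G P q β
      = ∑ ω : V → Fin q, if ∃ ψ : V → Fin q, GroundState P ψ ∧ CloseTo P ω ψ
          then 0 else Real.exp (β * mG G ω) := by
        rw [Z, Zstar, ← Finset.sum_sub_distrib]
        exact Finset.sum_congr rfl fun _ _ => by split_ifs <;> ring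
    _ ≤ ∑ _ω : V → Fin q, Real.exp (β * (G.edgeSet.ncard - δ)) := by
        gcongr with ω
        split_ifs with hω
        · positivity
        · exact Real.exp_le_exp.mpr (mul_le_mul_of_nonneg_left (by linarith [hfar ω hω]) hβ)
    _ = q ^ Fintype.card V * Real.exp (β * (G.edgeSet.ncard - δ)) := by
        simp

end PartitionFunction

lemma div_bounds_of_le_of_le_exp_mul {A B x : ℝ} (hA : 0 < A) (hAB : A ≤ B)
    (hBA : B ≤ Real.exp x * A) :
    (Real.exp (-x) ≤ A / B ∧ A / B ≤ 1) ∧ (Real.exp (-x) ≤ B / A ∧ B / A ≤ Real.exp x) := by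
  have hB : 0 < B := hA.trans_le hAB
  have hlower : Real.exp (-x) ≤ A / B := by
    rwa [le_div_iff₀ hB, Real.exp_neg, inv_mul_le_iff₀ (Real.exp_pos x)]
  have hAB' : A / B ≤ 1 := (div_le_one hB).mpr hAB
  exact ⟨⟨hlower, hAB'⟩, hlower.trans (hAB'.trans ((one_le_div hA).mpr hAB)),
    (div_le_iff₀ hA).mpr hBA⟩

/-- for β ≥ 4·log(e·q)/(αη), e^{−e^{−n}} ≤ Z*/Z ≤ 1; in particular
Z* is a relative e^{−n}-approximation of Z. -/
theorem statement5 [Fintype V] [DecidableEq V] [Nonempty V] (G : SimpleGraph V) {ℓ : ℕ}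
    (P : Fin ℓ → Set V) (hP : IsPartition P) (q : ℕ) (hq : 2 ≤ q)
    (α : ℝ) (hα : 0 < α) (hexp : PartExpansion G P α)
    (η : ℝ) (hη : 0 < η) (hsize : ∀ i, η * (Fintype.card V : ℝ) ≤ ((P i).ncard : ℝ))
    (β : ℝ) (hβ : 4 * Real.log (Real.exp 1 * (q : ℝ)) / (α * η) ≤ β) :
    (Real.exp (-Real.exp (-(Fintype.card V : ℝ))) ≤ Zstar G P q β / Z G q β ∧
        Zstar G P q β / Z G q β ≤ 1) ∧
      (Real.exp (-Real.exp (-(Fintype.card V : ℝ))) ≤ Z G q β / Zstar G P q β ∧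
        Z G q β / Zstar G P q β ≤ Real.exp (Real.exp (-(Fintype.card V : ℝ)))) := by
  set n : ℝ := (Fintype.card V : ℝ)
  have hn : 0 < n := by simp only [n]; exact_mod_cast Fintype.card_pos
  have hlogq : 0 ≤ Real.log q := Real.log_nonneg (by exact_mod_cast one_le_two.trans hq)
  have hβαη : 4 * (1 + Real.log q) ≤ β * (α * η) := by
    rwa [Real.log_mul (Real.exp_ne_zero 1) (by positivity), Real.log_exp,
      div_le_iff₀ (by positivity)] at hβ
  have hβ0 : 0 ≤ β := (pos_of_mul_pos_left (by linarith) (by positivity : 0 ≤ α * η)).le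
  have hground := exp_mul_ncard_edgeSet_le_Zstar G P q β (by omega) fun i =>
    Set.nonempty_of_ncard_ne_zero (Nat.cast_pos.mp ((mul_pos hη hn).trans_le (hsize i))).ne'
  have hexcited := Z_sub_Zstar_le G P q β hβ0 (α * η * n / 2) fun ω hω => by
    obtain ⟨i, hi⟩ := exists_no_majority_of_not_close P hP ω hω
    linarith [mG_add_le_of_no_majority G P α hexp ω i hi,
      mul_le_mul_of_nonneg_left (hsize i) hα.le]
  have hsmall : (q : ℝ) ^ Fintype.card V * Real.exp (β * (G.edgeSet.ncard - α * η * n / 2)) ≤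
      Real.exp (-n) * Real.exp (β * G.edgeSet.ncard) := by
    rw [← Real.exp_log (by positivity : (0 : ℝ) < q), ← Real.exp_nat_mul, ← Real.exp_add,
      ← Real.exp_add, Real.exp_le_exp]
    linarith [mul_le_mul_of_nonneg_right hβαη hn.le, mul_nonneg hlogq hn.le]
  have hZstar : 0 < Zstar G P q β := hground.trans_lt' (Real.exp_pos _)
  refine div_bounds_of_le_of_le_exp_mul hZstar (Zstar_le_Z G P q β) ?_
  calc Z G q β ≤ (Real.exp (-n) + 1) * Zstar G P q β := by
        linarith [mul_le_mul_of_nonneg_left hground (Real.exp_pos (-n)).le]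
    _ ≤ Real.exp (Real.exp (-n)) * Zstar G P q β := by
        gcongr
        exact Real.add_one_le_exp _

end Paper

end
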